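/- The two-dimensional mixed commuting property holds: for every continuously differentiable function f on [−1,1]², the η-derivative of the tensor-product interpolant equals the mixed interpolation–histopolation projection of ∂f/∂η, i.e. ∂/∂η [∑_{i=0}^N ∑_{j=0}^N f(ξ_i, ξ_j) l_i(ξ) l_j(η)] = ∑_{i=0}^N ∑_{j=1}^N (∫_{ξ_{j−1}}^{ξ_j} (∂f/∂η)(ξ_i, s) ds) l_i(ξ) h_j(η) for all (ξ, η) ∈ [−1,1]². -/

import Mathlib

/-!
For fixed `i` write `Fⱼ = f(ξᵢ, ξⱼ)`. By the fundamental theorem of calculus the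
histopolation coefficients `∫_{ξⱼ}^{ξⱼ₊₁} ∂f/∂η(ξᵢ, s) ds` are the increments `Fⱼ₊₁ - Fⱼ`,
and `hⱼ` is minus the `j`-th partial sum of the `l'ₖ`. The Lagrange basis is a partition of
unity, so `∑ₖ l'ₖ = 0`, and summation by parts turns `∑ⱼ (Fⱼ₊₁ - Fⱼ) hⱼ` into `∑ₖ Fₖ l'ₖ`,
the `η`-derivative of the interpolant.
-/

open Polynomial MeasureTheory Set Finset

theorem Polynomial.sum_eq_one_of_eval_eq_ite {ι R : Type*} [Fintype ι] [DecidableEq ι]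
    [Nonempty ι] [CommRing R] [IsDomain R] {v : ι → R} (hv : Function.Injective v)
    {l : ι → R[X]}
    (hdeg : ∀ i, (l i).natDegree < Fintype.card ι)
    (hlag : ∀ i j, (l i).eval (v j) = if i = j then 1 else 0) :
    ∑ i, l i = 1 := by
  refine eq_of_degrees_lt_of_eval_index_eq univ (v := v) hv.injOn ?_ ?_ ?_
  · rw [card_univ]
    exact (degree_sum_le _ _).trans_lt <| (Finset.sup_lt_iff (WithBot.bot_lt_coe _)).2
      fun i _ => (degree_le_natDegree).trans_lt (by exact_mod_cast hdeg i)
  · rw [degree_one, card_univ]; exact_mod_cast Fintype.card_pos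
  · intro j _
    simp [eval_finsetSum, hlag]

theorem intervalIntegral.integral_derivWithin_eq_sub_of_contDiffOn_Icc
    {E : Type*} [NormedAddCommGroup E] [NormedSpace ℝ E] [CompleteSpace E]
    {g : ℝ → E} {a b c d : ℝ} (hg : ContDiffOn ℝ 1 g (Icc a b))
    (hcd : c ≤ d) (hac : a ≤ c) (hdb : d ≤ b) :
    ∫ s in c..d, derivWithin g (Icc a b) s = g d - g c := by
  rcases hcd.eq_or_lt with rfl | hcd'
  · simp
  have hsub : Icc c d ⊆ Icc a b := Icc_subset_Icc hac hdb
  refine integral_eq_sub_of_hasDeriv_right_of_le hcd (hg.continuousOn.mono hsub) ?_ ?_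
  · intro t ht
    have hab : Icc a b ∈ nhds t := Icc_mem_nhds (hac.trans_lt ht.1) (ht.2.trans_le hdb)
    have hdiff := (hg.differentiableOn one_ne_zero) t (mem_of_mem_nhds hab)
    exact (hdiff.hasDerivWithinAt.hasDerivAt hab).hasDerivWithinAt
  · refine ContinuousOn.intervalIntegrable ?_
    rw [uIcc_of_le hcd]
    have hab : a < b := (hac.trans_lt hcd').trans_le hdb
    exact (hg.continuousOn_derivWithin (uniqueDiffOn_Icc hab) le_rfl).mono hsub

theorem Fin.sum_sub_mul_neg_sum_lt_eq_sum_mul {R : Type*} [CommRing R] (n : ℕ)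
    (F D : Fin (n + 1) → R) (hD : ∑ k, D k = 0) :
    ∑ j : Fin n, (F j.succ - F j.castSucc) *
        -∑ k : Fin (n + 1), (if (k : ℕ) < (j : ℕ) + 1 then D k else 0)
      = ∑ k, F k * D k := by
  set F' : ℕ → R := fun k => if hk : k < n + 1 then F ⟨k, hk⟩ else 0
  set D' : ℕ → R := fun k => if hk : k < n + 1 then D ⟨k, hk⟩ else 0
  have hF' (k : Fin (n + 1)) : F' k = F k := dif_pos k.isLt
  have hD' (k : Fin (n + 1)) : D' k = D k := dif_pos k.isLt
  have hpartial (m : ℕ) (hm : m ≤ n + 1) :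
      ∑ k : Fin (n + 1), (if (k : ℕ) < m then D k else 0) = ∑ k ∈ range m, D' k := by
    simp_rw [← hD']
    rw [Fin.sum_univ_eq_sum_range (fun k => if k < m then D' k else 0), ← sum_filter]
    congr 1
    ext k
    simp only [mem_filter, Finset.mem_range]
    omega
  have htotal : ∑ k ∈ range (n + 1), D' k = 0 := by
    rw [← hpartial _ le_rfl]
    exact (sum_congr rfl fun k _ => if_pos k.isLt).trans hD
  have hby_parts := sum_range_by_parts F' D' (n + 1)
  simp only [smul_eq_mul, add_tsub_cancel_right, htotal, mul_zero, zero_sub] at hby_parts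
  rw [← Fin.sum_univ_eq_sum_range (fun k => F' k * D' k),
    ← Fin.sum_univ_eq_sum_range (fun i => (F' (i + 1) - F' i) * ∑ k ∈ range (i + 1), D' k)]
    at hby_parts
  simp only [hF', hD'] at hby_parts
  rw [hby_parts, ← sum_neg_distrib]
  refine sum_congr rfl fun j _ => ?_
  rw [hpartial _ (by omega), mul_neg, show F' (j + 1) = F j.succ from hF' j.succ,
    show F' j = F j.castSucc from hF' j.castSucc]

theorem tensor_interpolant_eta_derivative_eq_mixed_projection_general
    (N : ℕ) (ξ : Fin (N + 1) → ℝ)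
    (hmono : StrictMono ξ) (hfirst : ξ 0 = -1) (hlast : ξ (Fin.last N) = 1)
    (l : Fin (N + 1) → Polynomial ℝ)
    (hdeg : ∀ i, (l i).natDegree ≤ N)
    (hlag : ∀ i j, (l i).eval (ξ j) = if i = j then 1 else 0)
    (h : Fin N → Polynomial ℝ)
    (hdef : ∀ i : Fin N,
      h i = -∑ j : Fin (N + 1), if (j : ℕ) < (i : ℕ) + 1 then derivative (l j) else 0)
    (f : ℝ × ℝ → ℝ)
    (hf : ContDiffOn ℝ 1 f (Set.Icc (-1 : ℝ) 1 ×ˢ Set.Icc (-1 : ℝ) 1)) :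
    ∀ x ∈ Set.Icc (-1 : ℝ) 1, ∀ y ∈ Set.Icc (-1 : ℝ) 1,
      deriv (fun t => ∑ i : Fin (N + 1), ∑ j : Fin (N + 1),
          f (ξ i, ξ j) * (l i).eval x * (l j).eval t) y
        = ∑ i : Fin (N + 1), ∑ j : Fin N,
            (∫ s in (ξ j.castSucc)..(ξ j.succ),
                derivWithin (fun t => f (ξ i, t)) (Set.Icc (-1 : ℝ) 1) s)
              * (l i).eval x * (h j).eval y := by
  intro x _ y _
  have hξ (i : Fin (N + 1)) : ξ i ∈ Icc (-1 : ℝ) 1 :=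
    ⟨hfirst ▸ hmono.monotone (Fin.zero_le i), hlast ▸ hmono.monotone (Fin.le_last i)⟩
  have hslice (i : Fin (N + 1)) : ContDiffOn ℝ 1 (fun t => f (ξ i, t)) (Icc (-1) 1) :=
    hf.comp (contDiff_const.prodMk contDiff_id).contDiffOn fun t ht => ⟨hξ i, ht⟩
  have hderiv_sum : ∑ k, (derivative (l k)).eval y = 0 := by
    have hdeg' (i : Fin (N + 1)) : (l i).natDegree < Fintype.card (Fin (N + 1)) := by
      simpa using Nat.lt_succ_of_le (hdeg i)
    rw [← eval_finsetSum, ← derivative_sum, sum_eq_one_of_eval_eq_ite hmono.injective hdeg' hlag,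
      derivative_one, eval_zero]
  have hinterp : HasDerivAt (fun t => ∑ i, ∑ j, f (ξ i, ξ j) * (l i).eval x * (l j).eval t)
      (∑ i, ∑ j, f (ξ i, ξ j) * (l i).eval x * (derivative (l j)).eval y) y :=
    HasDerivAt.fun_sum fun i _ => HasDerivAt.fun_sum fun j _ => ((l j).hasDerivAt y).const_mul _
  rw [hinterp.deriv]
  refine sum_congr rfl fun i _ => ?_
  rw [← Fin.sum_sub_mul_neg_sum_lt_eq_sum_mul N (fun j => f (ξ i, ξ j) * (l i).eval x) _
    hderiv_sum]
  refine sum_congr rfl fun j _ => ?_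
  rw [intervalIntegral.integral_derivWithin_eq_sub_of_contDiffOn_Icc (hslice i)
      (hmono Fin.castSucc_lt_succ).le (hξ _).1 (hξ _).2, hdef j]
  simp only [eval_neg, eval_finsetSum, apply_ite (eval y), eval_zero]
  ring

/-- The 2D mixed commuting property: for every continuously differentiable
function `f` on `[-1,1]²`, the `η`-derivative of the tensor-product interpolant
`∑_{i,j} f(ξᵢ,ξⱼ) lᵢ(ξ) lⱼ(η)` equals the mixed interpolation–histopolation projection of
`∂f/∂η`, i.e. `∑_{i=0}^N ∑_{j=1}^N (∫_{ξ_{j-1}}^{ξ_j} ∂f/∂η(ξᵢ,s) ds) lᵢ(ξ) hⱼ(η)`,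
for all `(ξ, η) ∈ [-1,1]²`. -/
theorem tensor_interpolant_eta_derivative_eq_mixed_projection
    (N : ℕ) (hN : 1 ≤ N) (ξ : Fin (N + 1) → ℝ)
    (hmono : StrictMono ξ) (hfirst : ξ 0 = -1) (hlast : ξ (Fin.last N) = 1)
    (l : Fin (N + 1) → Polynomial ℝ)
    (hdeg : ∀ i, (l i).natDegree ≤ N)
    (hlag : ∀ i j, (l i).eval (ξ j) = if i = j then 1 else 0)
    (h : Fin N → Polynomial ℝ)
    (hdef : ∀ i : Fin N,
      h i = -∑ j : Fin (N + 1), if (j : ℕ) < (i : ℕ) + 1 then derivative (l j) else 0)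
    (f : ℝ × ℝ → ℝ)
    (hf : ContDiffOn ℝ 1 f (Set.Icc (-1 : ℝ) 1 ×ˢ Set.Icc (-1 : ℝ) 1)) :
    ∀ x ∈ Set.Icc (-1 : ℝ) 1, ∀ y ∈ Set.Icc (-1 : ℝ) 1,
      deriv (fun t => ∑ i : Fin (N + 1), ∑ j : Fin (N + 1),
          f (ξ i, ξ j) * (l i).eval x * (l j).eval t) y
        = ∑ i : Fin (N + 1), ∑ j : Fin N,
            (∫ s in (ξ j.castSucc)..(ξ j.succ),
                derivWithin (fun t => f (ξ i, t)) (Set.Icc (-1 : ℝ) 1) s)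
              * (l i).eval x * (h j).eval y :=
  tensor_interpolant_eta_derivative_eq_mixed_projection_general N ξ hmono hfirst hlast l hdeg hlag h
    hdef f hf
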